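/- If a nonempty Π⁰₁ class of infinite binary sequences contains no computable member, then it is uncountable. -/

import Mathlib

/-- Partial functions recursive in an oracle `O : ℕ → ℕ` (oracle partial recursion). -/
inductive OracleRecursiveIn (O : ℕ → ℕ) : (ℕ →. ℕ) → Prop
  | zero : OracleRecursiveIn O (pure 0)
  | succ : OracleRecursiveIn O Nat.succ
  | left : OracleRecursiveIn O ↑fun n : ℕ => n.unpair.1
  | right : OracleRecursiveIn O ↑fun n : ℕ => n.unpair.2
  | oracle : OracleRecursiveIn O ↑O
  | pair {f g} : OracleRecursiveIn O f → OracleRecursiveIn O g →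
      OracleRecursiveIn O fun n => Nat.pair <$> f n <*> g n
  | comp {f g} : OracleRecursiveIn O f → OracleRecursiveIn O g →
      OracleRecursiveIn O fun n => g n >>= f
  | prec {f g} : OracleRecursiveIn O f → OracleRecursiveIn O g →
      OracleRecursiveIn O (Nat.unpaired fun a n =>
        n.rec (f a) fun y IH => do let i ← IH; g (Nat.pair a (Nat.pair y i)))
  | rfind {f} : OracleRecursiveIn O f →
      OracleRecursiveIn O fun a => Nat.rfind fun n => (fun m => m = 0) <$> f (Nat.pair a n)

/-- The oracle (characteristic function on `ℕ`) associated to a point of Cantor space. -/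
def boolOracle (A : ℕ → Bool) : ℕ → ℕ := fun n => (A n).toNat

/-- Turing reducibility `A ≤ᵀ B` for points of Cantor space. -/
def TuringLE (A B : ℕ → Bool) : Prop :=
  OracleRecursiveIn (boolOracle B) fun n => Part.some ((A n).toNat)

/-- Strict Turing reducibility `A <ᵀ B`. -/
def TuringLT (A B : ℕ → Bool) : Prop :=
  TuringLE A B ∧ ¬ TuringLE B A

/-- `A` is computable iff it is reducible to the empty oracle. -/
def ComputableSet (A : ℕ → Bool) : Prop :=
  TuringLE A fun _ => false

/-- `P` is a `Π⁰₁` class: the set of infinite paths through a computable,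
downward-closed set of finite binary strings. -/
def IsPi01Class (P : Set (ℕ → Bool)) : Prop :=
  ∃ T : List Bool → Bool, Computable T ∧
    (∀ σ τ : List Bool, σ <+: τ → T τ = true → T σ = true) ∧
    ∀ A : ℕ → Bool, A ∈ P ↔ ∀ n : ℕ, T ((List.range n).map A) = true

/-!
A countable, nonempty, closed subset of Cantor space has an isolated point (Baire category
theorem). For a `Π⁰₁` class `P = [T]` this is a path `A` that is the only path of `T` extending
some `A ↾ n`. By compactness, for each `j` all long enough strings of `T` extending `A ↾ n` agree
with `A` at `j`, so `A j` is computed by searching for a level at which these strings all agree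
at `j`.
-/

open Set Filter Topology PiNat

theorem IsClosed.exists_isolated_of_countable {X : Type*} [TopologicalSpace X] [CompactSpace X]
    [T2Space X] {s : Set X} (hs : IsClosed s) (hcount : s.Countable) (hne : s.Nonempty) :
    ∃ x ∈ s, {x} ∈ 𝓝[s] x := by
  have : CompactSpace s := isCompact_iff_compactSpace.mp hs.isCompact
  have : Nonempty s := hne.to_subtype
  have : Countable s := hcount.to_subtype
  obtain ⟨x, y, hy⟩ := nonempty_interior_of_iUnion_of_closed (f := fun x : s => {x})
    (fun _ => isClosed_singleton) (iUnion_of_singleton s)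
  obtain rfl : y = x := interior_subset (s := {x}) hy
  refine ⟨y, y.2, ?_⟩
  simpa using mem_nhds_subtype_iff_nhdsWithin.mp (mem_interior_iff_mem_nhds.mp hy)

theorem exists_inter_cylinder_subset_singleton {E : ℕ → Type*} [∀ n, TopologicalSpace (E n)]
    [∀ n, DiscreteTopology (E n)] {s : Set (∀ n, E n)} {x : ∀ n, E n} (hx : {x} ∈ 𝓝[s] x) :
    ∃ n, s ∩ cylinder x n ⊆ {x} := by
  obtain ⟨u, hu, hxu, hus⟩ := mem_nhdsWithin.mp hx
  obtain ⟨_, ⟨z, n, rfl⟩, hxz, hzu⟩ :=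
    (isTopologicalBasis_cylinders E).exists_subset_of_mem_open hxu hu
  refine ⟨n, fun y ⟨hy, hyx⟩ => hus ⟨hzu ?_, hy⟩⟩
  rwa [← mem_cylinder_iff_eq.mp hxz]

def initSeg {α : Type*} (A : ℕ → α) (k : ℕ) : List α := (List.range k).map A

section initSeg

variable {α : Type*}

@[simp]
theorem initSeg_length (A : ℕ → α) (k : ℕ) : (initSeg A k).length = k := by
  simp [initSeg]

theorem initSeg_add (A : ℕ → α) (k m : ℕ) :
    initSeg A (k + m) = initSeg A k ++ initSeg (fun i => A (k + i)) m := by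
  simp [initSeg, List.range_add, Function.comp_def]

theorem initSeg_prefix (A : ℕ → α) {k m : ℕ} (h : k ≤ m) : initSeg A k <+: initSeg A m := by
  obtain ⟨d, rfl⟩ := Nat.exists_eq_add_of_le h
  rw [initSeg_add]
  exact List.prefix_append _ _

theorem getD_initSeg (A : ℕ → α) {j k : ℕ} (h : j < k) (d : α) :
    (initSeg A k).getD j d = A j := by
  simp [initSeg, h]

theorem initSeg_getD (τ : List α) (d : α) : initSeg (fun i => τ.getD i d) τ.length = τ := by
  apply List.ext_getElem (by simp)
  intro i h _
  simp_all [initSeg]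

theorem initSeg_eq_iff_mem_cylinder {A B : ℕ → α} {n : ℕ} :
    initSeg B n = initSeg A n ↔ B ∈ cylinder A n := by
  simp [initSeg, mem_cylinder_iff, List.map_inj_left]

def paths (T : List α → Bool) : Set (ℕ → α) := {A | ∀ k, T (initSeg A k) = true}

variable [TopologicalSpace α] [DiscreteTopology α]

theorem isLocallyConstant_initSeg (k : ℕ) : IsLocallyConstant fun A : ℕ → α => initSeg A k :=
  (IsLocallyConstant.iff_exists_open _).mpr fun A =>
    ⟨cylinder A k, isOpen_cylinder _ _ _, self_mem_cylinder _ _,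
      fun _ hB => initSeg_eq_iff_mem_cylinder.mpr hB⟩

theorem isClosed_setOf_initSeg (p : List α → Prop) (k : ℕ) :
    IsClosed {A : ℕ → α | p (initSeg A k)} :=
  ⟨isLocallyConstant_initSeg k {τ | p τ}ᶜ⟩

theorem isClosed_paths (T : List α → Bool) : IsClosed (paths T) := by
  simpa only [paths, ofPred_forall] using
    isClosed_iInter fun k => isClosed_setOf_initSeg (T · = true) k

end initSeg

theorem eventually_getD_eq_of_isolated {T : List Bool → Bool}
    (hT : ∀ σ τ : List Bool, σ <+: τ → T τ = true → T σ = true) {A : ℕ → Bool} {n : ℕ}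
    (hiso : paths T ∩ cylinder A n ⊆ {A}) (j : ℕ) :
    ∀ᶠ K in atTop, ∀ ρ : List Bool, ρ.length = K → T (initSeg A n ++ ρ) = true →
      (initSeg A n ++ ρ).getD j false = A j := by
  set V : ℕ → Set (ℕ → Bool) := fun K => cylinder A n ∩ {B | T (initSeg B K) = true}
  have hV_anti : Antitone V := fun K K' hK B ⟨hBA, hBT⟩ => ⟨hBA, hT _ _ (initSeg_prefix B hK) hBT⟩
  have hV_closed (K : ℕ) : IsClosed (V K) := by
    refine IsClosed.inter ?_ (isClosed_setOf_initSeg (T · = true) K)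
    simpa only [initSeg_eq_iff_mem_cylinder, ofPred_mem_eq] using
      isClosed_setOf_initSeg (· = initSeg A n) n
  have hU : ∀ B ∈ ⋂ K, V K, {B | B j = A j} ∈ 𝓝 B := by
    intro B hB
    obtain rfl : B = A := hiso ⟨fun K => (mem_iInter.mp hB K).2, (mem_iInter.mp hB 0).1⟩
    exact ((isOpen_discrete {B j}).preimage (continuous_apply j)).mem_nhds (mem_singleton _)
  obtain ⟨K₀, hK₀⟩ :=
    exists_subset_nhds_of_isCompact hV_anti.directed_ge (fun K => (hV_closed K).isCompact) hU
  filter_upwards [eventually_ge_atTop K₀] with K hK ρ hρ hTρ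
  set B : ℕ → Bool := fun i => (initSeg A n ++ ρ).getD i false
  have hB : initSeg B (n + K) = initSeg A n ++ ρ := by
    have := initSeg_getD (initSeg A n ++ ρ) false
    rwa [List.length_append, initSeg_length, hρ] at this
  have hBA : initSeg B n = initSeg A n := by
    rw [initSeg_add] at hB
    exact (List.append_inj hB (by simp)).1
  exact hK₀ ⟨initSeg_eq_iff_mem_cylinder.mp hBA, hT _ _ (initSeg_prefix B (by omega)) (hB ▸ hTρ)⟩

theorem Computable.list_any {α β : Type*} [Primcodable α] [Primcodable β] {f : α → List β}
    {p : α → β → Bool} (hf : Computable f) (hp : Computable₂ p) :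
    Computable fun a => (f a).any (p a) := by
  have hrec (l : List β) (q : β → Bool) (m : ℕ) :
      Nat.rec (motive := fun _ => Bool) false (fun i acc => acc || l[i]?.any q) m =
        (l.take m).any q := by
    induction m with
    | zero => simp
    | succ m ih => cases h : l[m]? <;> simp [List.take_add_one, ih, h]
  have hor : Computable₂ (· || ·) := (Primrec.dom_bool₂ (· || ·)).to_comp
  have hany : Computable₂ fun a (o : Option β) => o.any (p a) :=
    (Computable.option_casesOn Computable.snd (Computable.const false)
      (hp.comp (Computable.fst.comp Computable.fst) Computable.snd).to₂).of_eq
      fun ⟨_, o⟩ => by cases o <;> rfl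
  have hstep : Computable₂ fun a (s : ℕ × Bool) => s.2 || (f a)[s.1]?.any (p a) :=
    hor.comp (Computable.snd.comp Computable.snd) (hany.comp Computable.fst
      (Computable.list_getElem?.comp (hf.comp Computable.fst)
        (Computable.fst.comp Computable.snd)))
  exact (Computable.nat_rec (Computable.list_length.comp hf) (Computable.const false)
    hstep).of_eq fun a => by rw [hrec, List.take_length]

theorem Computable.of_search {α σ : Type*} [Primcodable α] [Primcodable σ] {f : α → σ}
    {p : α → ℕ → Bool} {g : α → ℕ → σ} (hp : Computable₂ p) (hg : Computable₂ g)
    (hex : ∀ a, ∃ K, p a K = true) (hg_eq : ∀ a K, p a K = true → g a K = f a) :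
    Computable f := by
  refine ((Partrec.rfind hp.partrec₂).map hg).of_eq_tot fun a => ?_
  obtain ⟨K, hK⟩ := hex a
  obtain ⟨K', hK', -⟩ := Nat.rfind_min' hK
  exact (Part.mem_map_iff _).mpr ⟨K', hK', hg_eq a K' (by simpa using Nat.rfind_spec hK')⟩

def allStrings : ℕ → List (List Bool)
  | 0 => [[]]
  | K + 1 => (allStrings K).flatMap fun τ => [false :: τ, true :: τ]

theorem mem_allStrings {K : ℕ} {τ : List Bool} : τ ∈ allStrings K ↔ τ.length = K := by
  induction K generalizing τ with
  | zero => simp [allStrings]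
  | succ K ih =>
    rcases τ with _ | ⟨b, τ⟩
    · simp [allStrings]
    · cases b <;> simp [allStrings, ih]

theorem primrec_allStrings : Primrec allStrings := by
  have hstep : Primrec₂ fun (_ : ℕ) (L : List (List Bool)) =>
      L.flatMap fun τ => [false :: τ, true :: τ] :=
    (Primrec.list_flatMap Primrec.snd ((Primrec.list_cons.comp
      (Primrec.list_cons.comp (Primrec.const false) Primrec.snd)
      (Primrec.list_cons.comp (Primrec.list_cons.comp (Primrec.const true) Primrec.snd)
        (Primrec.const []))).to₂)).to₂
  refine (Primrec.nat_rec₁ [[]] hstep).of_eq fun K => ?_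
  induction K with
  | zero => rfl
  | succ K ih => simp [allStrings, ih]

def hasExtensionWithBit (T : List Bool → Bool) (σ : List Bool) (j K : ℕ) (b : Bool) : Bool :=
  (allStrings K).any fun ρ => T (σ ++ ρ) && (σ ++ ρ).getD j false == b

theorem computable₂_hasExtensionWithBit {T : List Bool → Bool} (hT : Computable T)
    (σ : List Bool) (b : Bool) : Computable₂ fun j K => hasExtensionWithBit T σ j K b := by
  have hand : Computable₂ (· && ·) := (Primrec.dom_bool₂ (· && ·)).to_comp
  have hext : Computable₂ fun (_ : ℕ × ℕ) (ρ : List Bool) => σ ++ ρ :=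
    (Primrec.list_append.comp (Primrec.const σ) Primrec.snd).to_comp
  exact Computable.list_any (primrec_allStrings.to_comp.comp Computable.snd)
    (hand.comp (hT.comp hext) (Primrec.beq.to_comp.comp
      ((Primrec.list_getD false).to_comp.comp hext (Computable.fst.comp Computable.fst))
      (Computable.const b))).to₂

theorem computable_of_eventually_getD_eq {T : List Bool → Bool} (hT : Computable T)
    {A : ℕ → Bool} (hA : A ∈ paths T) (n : ℕ)
    (hdec : ∀ j, ∀ᶠ K in atTop, ∀ ρ : List Bool, ρ.length = K → T (initSeg A n ++ ρ) = true →
      (initSeg A n ++ ρ).getD j false = A j) :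
    Computable A := by
  set extBit := hasExtensionWithBit T (initSeg A n)
  have hext_self (j K : ℕ) (hj : j < n + K) : extBit j K (A j) = true := by
    simp only [extBit, hasExtensionWithBit, List.any_eq_true, mem_allStrings]
    refine ⟨initSeg (fun i => A (n + i)) K, initSeg_length _ _, ?_⟩
    rw [← initSeg_add, hA (n + K), getD_initSeg A hj, beq_self_eq_true, Bool.and_self]
  have hext_not (j : ℕ) : ∀ᶠ K in atTop, extBit j K (!A j) = false := by
    filter_upwards [hdec j] with K hK
    simp only [extBit, hasExtensionWithBit, List.any_eq_false, mem_allStrings]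
    intro ρ hρ
    cases hρT : T (initSeg A n ++ ρ)
    · simp
    · rw [hK ρ hρ hρT]
      simp
  have hext_comp (b : Bool) : Computable₂ fun j K => extBit j K b :=
    computable₂_hasExtensionWithBit hT _ b
  -- At a level with `j < n + K` where bit `j` takes only one value, that value is `A j`,
  -- as witnessed by `A ↾ (n + K)`.
  refine Computable.of_search (g := fun j K => extBit j K true)
    (p := fun j K => decide (j < n + K) && !(extBit j K true && extBit j K false)) ?_
    (hext_comp true) (fun j => ?_) (fun j K hp => ?_)
  · have hand : Computable₂ (· && ·) := (Primrec.dom_bool₂ (· && ·)).to_comp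
    have hnot : Computable (! ·) := (Primrec.dom_bool (! ·)).to_comp
    exact hand.comp (Primrec.nat_lt.decide.to_comp.comp Computable.fst
        ((Primrec.nat_add.comp (Primrec.const n) Primrec.snd).to_comp))
      (hnot.comp (hand.comp (hext_comp true) (hext_comp false)))
  · obtain ⟨K, hK, hjK⟩ := ((hext_not j).and (eventually_gt_atTop j)).exists
    have hdecided : (extBit j K true && extBit j K false) = false := by
      cases hAj : A j <;> simp_all
    exact ⟨K, by simp [hdecided, show j < n + K by omega]⟩
  · simp only [Bool.and_eq_true, decide_eq_true_eq, Bool.not_eq_true'] at hp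
    have := hext_self j K hp.1
    cases hAj : A j <;> simp_all

/-- A nonempty `Π⁰₁` class with no computable member is uncountable. -/
theorem special_Pi01_class_uncountable (P : Set (ℕ → Bool))
    (hP : IsPi01Class P) (hne : P.Nonempty)
    (hnc : ∀ A ∈ P, ¬ Computable A) : ¬ P.Countable := by
  intro hcount
  obtain ⟨T, hT, hT_down, hP_paths⟩ := hP
  obtain rfl : P = paths T := Set.ext hP_paths
  obtain ⟨A, hA, hA_iso⟩ := (isClosed_paths T).exists_isolated_of_countable hcount hne
  obtain ⟨n, hn⟩ := exists_inter_cylinder_subset_singleton hA_iso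
  exact hnc A hA
    (computable_of_eventually_getD_eq hT hA n (eventually_getD_eq_of_isolated hT_down hn))
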